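/- Let P, A, B, F be finite nonempty index types with |A| = |B| = d. Let R be a positive semidefinite complex matrix indexed by (P × A × B × F) × (P × A × B × F). Then the following are equivalent: (i) for every bistochastic channel Choi operator C indexed by (A × B) × (A × B), the link product R * C is positive semidefinite and satisfies Tr_F[R * C] = 1_P (i.e., R * C is the Choi operator of a quantum channel from P to F); (ii) there exist a Hermitian matrix S indexed by P × A × B × F with Tr_F[S] = 0, a Hermitian matrix G indexed by P × A with Tr_A[G] = 0, and a Hermitian matrix H indexed by P × B with Tr_B[H] = 0, such that R = (1/(d·|F|))·1_{P×A×B×F} + S + G̃ ⊗ 1_F + H̃ ⊗ 1_F, where G̃ is the matrix indexed by P × A × B with entries G̃((p,a,b),(p',a',b')) = G((p,a),(p',a'))·δ_{b b'} and H̃ is the matrix indexed by P × A × B with entries H̃((p,a,b),(p',a',b')) = H((p,b),(p',b'))·δ_{a a'}. -/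

import Mathlib

/-!
Only the partial trace `T = Tr_F R` enters the normalisation of `R * C`: blockwise in `p, p'`,
`Σ_f (R * C)((p,f),(p',f)) = Σ_{x,y} T_{pp'}(x,y) C(x,y)`. Since `1/d` lies in the relative
interior of the bistochastic Choi operators (every Hermitian perturbation with vanishing marginals
stays positive for small size), the normalisation holds for all of them iff each block `T_{pp'}`
has trace `d δ_{pp'}` and annihilates every matrix with vanishing marginals. The annihilator of
that space is `{X ⊗ 1 + 1 ⊗ Y}`, and normalising `X` and `Y` produces `G` and `H`; `S` is the
rest. Positivity of `R * C` is automatic, being a compression of `R ⊗ C`.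
-/

open Matrix ComplexOrder

/-- The link product `R * C` of a matrix `R` on `P × A × B × F` with a matrix `C` on
`A × B`, with entries `(R * C)((p,f),(p',f')) = Σ_{a,b,a',b'} R((p,a,b,f),(p',a',b',f'))
· C((a,b),(a',b'))`. -/
noncomputable def linkPABF {P A B F : Type*} [Fintype A] [Fintype B]
    (R : Matrix (P × A × B × F) (P × A × B × F) ℂ) (C : Matrix (A × B) (A × B) ℂ) :
    Matrix (P × F) (P × F) ℂ :=
  Matrix.of fun (u u' : P × F) =>
    ∑ a : A, ∑ b : B, ∑ a' : A, ∑ b' : B,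
      R (u.1, a, b, u.2) (u'.1, a', b', u'.2) * C (a, b) (a', b')

open scoped Kronecker ComplexStarModule

namespace Matrix

variable {A B R : Type*}

def traceRight [Fintype B] [AddCommMonoid R] (M : Matrix (A × B) (A × B) R) : Matrix A A R :=
  of fun a a' => ∑ b, M (a, b) (a', b)

def traceLeft [Fintype A] [AddCommMonoid R] (M : Matrix (A × B) (A × B) R) : Matrix B B R :=
  of fun b b' => ∑ a, M (a, b) (a, b')

@[simp] lemma traceRight_apply [Fintype B] [AddCommMonoid R] (M : Matrix (A × B) (A × B) R)
    (a a' : A) : traceRight M a a' = ∑ b, M (a, b) (a', b) := rfl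

@[simp] lemma traceLeft_apply [Fintype A] [AddCommMonoid R] (M : Matrix (A × B) (A × B) R)
    (b b' : B) : traceLeft M b b' = ∑ a, M (a, b) (a, b') := rfl

lemma traceRight_add [Fintype B] [AddCommMonoid R] (M N : Matrix (A × B) (A × B) R) :
    traceRight (M + N) = traceRight M + traceRight N := by
  ext; simp [Finset.sum_add_distrib]

lemma traceLeft_add [Fintype A] [AddCommMonoid R] (M N : Matrix (A × B) (A × B) R) :
    traceLeft (M + N) = traceLeft M + traceLeft N := by
  ext; simp [Finset.sum_add_distrib]

lemma traceRight_sub [Fintype B] [AddCommGroup R] (M N : Matrix (A × B) (A × B) R) :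
    traceRight (M - N) = traceRight M - traceRight N := by
  ext; simp [Finset.sum_sub_distrib]

lemma traceLeft_sub [Fintype A] [AddCommGroup R] (M N : Matrix (A × B) (A × B) R) :
    traceLeft (M - N) = traceLeft M - traceLeft N := by
  ext; simp [Finset.sum_sub_distrib]

lemma traceRight_neg [Fintype B] [AddCommGroup R] (M : Matrix (A × B) (A × B) R) :
    traceRight (-M) = -traceRight M := by
  ext; simp

lemma traceLeft_neg [Fintype A] [AddCommGroup R] (M : Matrix (A × B) (A × B) R) :
    traceLeft (-M) = -traceLeft M := by
  ext; simp

lemma traceRight_smul [Fintype B] [AddCommMonoid R] {S : Type*} [DistribSMul S R] (s : S)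
    (M : Matrix (A × B) (A × B) R) : traceRight (s • M) = s • traceRight M := by
  ext; simp [Finset.smul_sum]

lemma traceLeft_smul [Fintype A] [AddCommMonoid R] {S : Type*} [DistribSMul S R] (s : S)
    (M : Matrix (A × B) (A × B) R) : traceLeft (s • M) = s • traceLeft M := by
  ext; simp [Finset.smul_sum]

lemma traceRight_transpose [Fintype B] [AddCommMonoid R] (M : Matrix (A × B) (A × B) R) :
    traceRight Mᵀ = (traceRight M)ᵀ := rfl

lemma traceLeft_transpose [Fintype A] [AddCommMonoid R] (M : Matrix (A × B) (A × B) R) :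
    traceLeft Mᵀ = (traceLeft M)ᵀ := rfl

lemma traceRight_conjTranspose [Fintype B] [AddCommMonoid R] [StarAddMonoid R]
    (M : Matrix (A × B) (A × B) R) : traceRight Mᴴ = (traceRight M)ᴴ := by
  ext; simp [star_sum]

lemma traceLeft_conjTranspose [Fintype A] [AddCommMonoid R] [StarAddMonoid R]
    (M : Matrix (A × B) (A × B) R) : traceLeft Mᴴ = (traceLeft M)ᴴ := by
  ext; simp [star_sum]

lemma trace_traceRight [Fintype A] [Fintype B] [AddCommMonoid R] (M : Matrix (A × B) (A × B) R) :
    trace (traceRight M) = trace M := by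
  simp [trace, Fintype.sum_prod_type]

lemma trace_traceLeft [Fintype A] [Fintype B] [AddCommMonoid R] (M : Matrix (A × B) (A × B) R) :
    trace (traceLeft M) = trace M := by
  simp [trace, Fintype.sum_prod_type, Finset.sum_comm (γ := A)]

lemma sub_kronecker [Ring R] {m n : Type*} (X Y : Matrix A A R) (W : Matrix m n R) :
    (X - Y) ⊗ₖ W = X ⊗ₖ W - Y ⊗ₖ W := by
  ext; simp [sub_mul]

lemma kronecker_sub [Ring R] {m n : Type*} (X : Matrix m n R) (W V : Matrix B B R) :
    X ⊗ₖ (W - V) = X ⊗ₖ W - X ⊗ₖ V := by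
  ext; simp [mul_sub]

lemma traceRight_kronecker_one [Fintype B] [DecidableEq B] [CommSemiring R] (X : Matrix A A R) :
    traceRight (X ⊗ₖ (1 : Matrix B B R)) = (Fintype.card B : R) • X := by
  ext; simp [mul_comm]

lemma traceRight_one_kronecker [Fintype B] [DecidableEq A] [CommSemiring R] (W : Matrix B B R) :
    traceRight ((1 : Matrix A A R) ⊗ₖ W) = trace W • 1 := by
  ext; simp [one_apply, trace]

lemma traceLeft_kronecker_one [Fintype A] [DecidableEq B] [CommSemiring R] (X : Matrix A A R) :
    traceLeft (X ⊗ₖ (1 : Matrix B B R)) = trace X • 1 := by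
  ext; simp [one_apply, trace, mul_comm]

lemma traceLeft_one_kronecker [Fintype A] [DecidableEq A] [CommSemiring R] (W : Matrix B B R) :
    traceLeft ((1 : Matrix A A R) ⊗ₖ W) = (Fintype.card A : R) • W := by
  ext; simp

lemma trace_kronecker_one_mul [Fintype A] [Fintype B] [DecidableEq B] [CommSemiring R]
    (X : Matrix A A R) (Y : Matrix (A × B) (A × B) R) :
    trace ((X ⊗ₖ (1 : Matrix B B R)) * Y) = trace (X * traceRight Y) := by
  simp only [trace, diag_apply, mul_apply, kroneckerMap_apply, one_apply, mul_ite, mul_one,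
    mul_zero, ite_mul, zero_mul, Fintype.sum_prod_type, Finset.sum_ite_eq, Finset.mem_univ,
    if_true, traceRight_apply, Finset.mul_sum]
  exact Finset.sum_congr rfl fun _ _ => Finset.sum_comm

lemma trace_one_kronecker_mul [Fintype A] [Fintype B] [DecidableEq A] [CommSemiring R]
    (W : Matrix B B R) (Y : Matrix (A × B) (A × B) R) :
    trace (((1 : Matrix A A R) ⊗ₖ W) * Y) = trace (W * traceLeft Y) := by
  simp only [trace, diag_apply, mul_apply, kroneckerMap_apply, one_apply, ite_mul, one_mul,
    zero_mul, Fintype.sum_prod_type, Finset.sum_ite_irrel, Finset.sum_const_zero, Finset.sum_ite_eq,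
    Finset.mem_univ, if_true, traceLeft_apply, Finset.mul_sum]
  rw [Finset.sum_comm]
  exact Finset.sum_congr rfl fun _ _ => Finset.sum_comm

lemma traceRight_one [Fintype B] [DecidableEq A] [DecidableEq B] [CommSemiring R] :
    traceRight (1 : Matrix (A × B) (A × B) R) = (Fintype.card B : R) • 1 := by
  rw [← one_kronecker_one, traceRight_kronecker_one]

lemma traceLeft_one [Fintype A] [DecidableEq A] [DecidableEq B] [CommSemiring R] :
    traceLeft (1 : Matrix (A × B) (A × B) R) = (Fintype.card A : R) • 1 := by
  rw [← one_kronecker_one, traceLeft_one_kronecker]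

lemma eq_of_forall_trace_transpose_mul_eq_zero {𝕜 : Type*} [RCLike 𝕜] [Fintype A] [Fintype B]
    [DecidableEq A] [DecidableEq B] [Nonempty A] [Nonempty B] {M : Matrix (A × B) (A × B) 𝕜}
    (hM : ∀ Y, traceRight Y = 0 → traceLeft Y = 0 → trace (Mᵀ * Y) = 0) :
    M = (Fintype.card B : 𝕜)⁻¹ • (traceRight M ⊗ₖ 1) +
      (Fintype.card A : 𝕜)⁻¹ • (1 ⊗ₖ traceLeft M) -
      (trace M / (Fintype.card A * Fintype.card B)) • 1 := by
  -- `N` is the projection of `M` onto `{X ⊗ 1 + 1 ⊗ Y}` along the matrices with vanishing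
  -- marginals; the remainder `Z` is orthogonal to its own conjugate, hence zero.
  set N := (Fintype.card B : 𝕜)⁻¹ • (traceRight M ⊗ₖ 1) +
    (Fintype.card A : 𝕜)⁻¹ • (1 ⊗ₖ traceLeft M) -
    (trace M / (Fintype.card A * Fintype.card B)) • (1 : Matrix (A × B) (A × B) 𝕜)
  have hA : (Fintype.card A : 𝕜) ≠ 0 := by simp
  have hB : (Fintype.card B : 𝕜) ≠ 0 := by simp
  have hNR : traceRight N = traceRight M := by
    simp only [N, ← one_kronecker_one, traceRight_sub, traceRight_add, traceRight_smul,
      traceRight_kronecker_one, traceRight_one_kronecker, trace_traceLeft, smul_smul]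
    field_simp
    simp
  have hNL : traceLeft N = traceLeft M := by
    simp only [N, ← one_kronecker_one, traceLeft_sub, traceLeft_add, traceLeft_smul,
      traceLeft_kronecker_one, traceLeft_one_kronecker, trace_traceRight, trace_one, smul_smul]
    field_simp
    simp
  have hN : ∀ Y, traceRight Y = 0 → traceLeft Y = 0 → trace (Nᵀ * Y) = 0 := by
    intro Y hYR hYL
    simp [N, ← kroneckerMap_transpose, sub_mul, add_mul, trace_kronecker_one_mul,
      trace_one_kronecker_mul, ← trace_traceRight Y, hYR, hYL]
  set Z := M - N
  have hZR : traceRight (Zᵀ)ᴴ = 0 := by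
    rw [traceRight_conjTranspose, traceRight_transpose, traceRight_sub, hNR, sub_self]; simp
  have hZL : traceLeft (Zᵀ)ᴴ = 0 := by
    rw [traceLeft_conjTranspose, traceLeft_transpose, traceLeft_sub, hNL, sub_self]; simp
  have hZ : trace (Zᵀ * (Zᵀ)ᴴ) = 0 :=
    calc trace (Zᵀ * (Zᵀ)ᴴ) = trace (Mᵀ * (Zᵀ)ᴴ) - trace (Nᵀ * (Zᵀ)ᴴ) := by
          rw [← trace_sub, ← sub_mul, ← transpose_sub]
      _ = 0 := by rw [hM _ hZR hZL, hN _ hZR hZL, sub_zero]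
  rw [← sub_eq_zero]
  simpa using trace_mul_conjTranspose_self_eq_zero_iff.mp hZ

lemma submatrix_one_prodMk {P Q R : Type*} [DecidableEq P] [DecidableEq Q]
    [MulZeroOneClass R] (p p' : P) :
    (1 : Matrix (P × Q) (P × Q) R).submatrix (Prod.mk p) (Prod.mk p') =
      (if p = p' then 1 else 0 : R) • 1 := by
  ext; by_cases hp : p = p' <;> simp [one_apply, hp]

theorem PosSemidef.sum_blocks {ι κ : Type*} [Fintype ι] [Fintype κ] [DecidableEq ι]
    {N : Matrix (ι × κ) (ι × κ) ℂ} (hN : N.PosSemidef) :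
    (of fun i j => ∑ x, ∑ y, N (i, x) (j, y)).PosSemidef := by
  let J : Matrix (ι × κ) ι ℂ := of fun p j => if p.1 = j then 1 else 0
  have hJ : (of fun i j => ∑ x, ∑ y, N (i, x) (j, y)) = Jᴴ * N * J := by
    ext i j
    simp only [J, mul_apply, conjTranspose_apply, of_apply, Fintype.sum_prod_type, Finset.sum_mul]
    simp only [RCLike.star_def, MonoidWithZeroHom.map_ite_one_zero, ite_mul, one_mul, zero_mul,
      mul_ite, mul_one, mul_zero, Finset.sum_ite_irrel, Finset.sum_const_zero, Finset.sum_ite_eq',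
      Finset.mem_univ, if_true]
    exact Finset.sum_comm
  rw [hJ]
  exact hN.conjTranspose_mul_mul_same J

theorem IsHermitian.exists_posSemidef_smul_one_add {ι : Type*} [Fintype ι] [DecidableEq ι]
    {Y : Matrix ι ι ℂ} (hY : Y.IsHermitian) {c : ℝ} (hc : 0 < c) :
    ∃ ε : ℝ, 0 < ε ∧ ((c : ℂ) • (1 : Matrix ι ι ℂ) + (ε : ℂ) • Y).PosSemidef := by
  open scoped MatrixOrder Matrix.Norms.L2Operator in
  have hshift : (Y + (‖Y‖ : ℂ) • 1).PosSemidef := by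
    have := (le_iff).mp (IsSelfAdjoint.neg_algebraMap_norm_le_self hY)
    simpa [Algebra.algebraMap_eq_smul_one] using this
  set r := ‖Y‖
  have hr : 0 ≤ r := norm_nonneg _
  refine ⟨c / (r + 1), by positivity, ?_⟩
  have hε : c / (r + 1) * r ≤ c := by
    rw [div_mul_eq_mul_div, div_le_iff₀ (by positivity)]; nlinarith
  have key : (c : ℂ) • (1 : Matrix ι ι ℂ) + ((c / (r + 1) : ℝ) : ℂ) • Y
      = ((c / (r + 1) : ℝ) : ℂ) • (Y + (r : ℂ) • 1) +
        ((c - c / (r + 1) * r : ℝ) : ℂ) • 1 := by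
    push_cast; module
  rw [key]
  exact (hshift.smul (by positivity)).add
    (PosSemidef.one.smul (by exact_mod_cast sub_nonneg.mpr hε))

section Bistochastic

variable [Fintype A] [Fintype B] [DecidableEq A] [DecidableEq B]

def IsBistochasticChoi (C : Matrix (A × B) (A × B) ℂ) : Prop :=
  C.PosSemidef ∧ traceRight C = 1 ∧ traceLeft C = 1

lemma isBistochasticChoi_iff {C : Matrix (A × B) (A × B) ℂ} :
    IsBistochasticChoi C ↔ C.PosSemidef ∧
      (∀ a a', ∑ b, C (a, b) (a', b) = if a = a' then 1 else 0) ∧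
      (∀ b b', ∑ a, C (a, b) (a, b') = if b = b' then 1 else 0) := by
  simp only [IsBistochasticChoi, ← Matrix.ext_iff, traceRight_apply, traceLeft_apply, one_apply]

lemma isBistochasticChoi_inv_card_smul_one [Nonempty A] (hAB : Fintype.card A = Fintype.card B) :
    IsBistochasticChoi ((Fintype.card A : ℂ)⁻¹ • (1 : Matrix (A × B) (A × B) ℂ)) := by
  have hA : (Fintype.card A : ℂ) ≠ 0 := by simp
  refine ⟨PosSemidef.one.smul (by positivity), ?_, ?_⟩
  · rw [traceRight_smul, traceRight_one, smul_smul, ← hAB, inv_mul_cancel₀ hA, one_smul]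
  · rw [traceLeft_smul, traceLeft_one, smul_smul, inv_mul_cancel₀ hA, one_smul]

lemma exists_isBistochasticChoi_inv_card_smul_one_add [Nonempty A]
    (hAB : Fintype.card A = Fintype.card B) {Y : Matrix (A × B) (A × B) ℂ} (hY : Y.IsHermitian)
    (hYR : traceRight Y = 0) (hYL : traceLeft Y = 0) :
    ∃ ε : ℝ, 0 < ε ∧ IsBistochasticChoi ((Fintype.card A : ℂ)⁻¹ • 1 + (ε : ℂ) • Y) := by
  obtain ⟨ε, hε, hpsd⟩ := hY.exists_posSemidef_smul_one_add (c := (Fintype.card A : ℝ)⁻¹)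
    (by positivity)
  obtain ⟨-, hR, hL⟩ := isBistochasticChoi_inv_card_smul_one (B := B) hAB
  refine ⟨ε, hε, by simpa using hpsd, ?_, ?_⟩
  · rw [traceRight_add, hR, traceRight_smul, hYR, smul_zero, add_zero]
  · rw [traceLeft_add, hL, traceLeft_smul, hYL, smul_zero, add_zero]

lemma trace_transpose_mul_eq_zero_of_forall_isBistochasticChoi [Nonempty A]
    (hAB : Fintype.card A = Fintype.card B) {M : Matrix (A × B) (A × B) ℂ} {c : ℂ}
    (hM : ∀ C, IsBistochasticChoi C → trace (Mᵀ * C) = c) {Y : Matrix (A × B) (A × B) ℂ}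
    (hYR : traceRight Y = 0) (hYL : traceLeft Y = 0) : trace (Mᵀ * Y) = 0 := by
  have hHerm : ∀ X : Matrix (A × B) (A × B) ℂ, X.IsHermitian → traceRight X = 0 →
      traceLeft X = 0 → trace (Mᵀ * X) = 0 := by
    intro X hX hXR hXL
    obtain ⟨ε, hε, hC⟩ := exists_isBistochasticChoi_inv_card_smul_one_add hAB hX hXR hXL
    have h := hM _ hC
    rw [mul_add, trace_add, hM _ (isBistochasticChoi_inv_card_smul_one hAB), add_eq_left,
      Matrix.mul_smul, trace_smul, smul_eq_mul, mul_eq_zero] at h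
    exact h.resolve_left (by exact_mod_cast hε.ne')
  have hRe : traceRight (ℜ Y : Matrix (A × B) (A × B) ℂ) = 0 := by
    simp [realPart_apply_coe, traceRight_smul, traceRight_add, star_eq_conjTranspose,
      traceRight_conjTranspose, hYR]
  have hLe : traceLeft (ℜ Y : Matrix (A × B) (A × B) ℂ) = 0 := by
    simp [realPart_apply_coe, traceLeft_smul, traceLeft_add, star_eq_conjTranspose,
      traceLeft_conjTranspose, hYL]
  have hRi : traceRight (ℑ Y : Matrix (A × B) (A × B) ℂ) = 0 := by
    simp [imaginaryPart_apply_coe, traceRight_neg, traceRight_smul, traceRight_sub,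
      star_eq_conjTranspose, traceRight_conjTranspose, hYR]
  have hLi : traceLeft (ℑ Y : Matrix (A × B) (A × B) ℂ) = 0 := by
    simp [imaginaryPart_apply_coe, traceLeft_neg, traceLeft_smul, traceLeft_sub,
      star_eq_conjTranspose, traceLeft_conjTranspose, hYL]
  rw [← realPart_add_I_smul_imaginaryPart Y, mul_add, trace_add, Matrix.mul_smul, trace_smul,
    hHerm _ (ℜ Y).2.isHermitian hRe hLe, hHerm _ (ℑ Y).2.isHermitian hRi hLi, smul_zero,
    add_zero]

lemma trace_eq_of_forall_isBistochasticChoi [Nonempty A] (hAB : Fintype.card A = Fintype.card B)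
    {M : Matrix (A × B) (A × B) ℂ} {c : ℂ}
    (hM : ∀ C, IsBistochasticChoi C → trace (Mᵀ * C) = c) :
    trace M = Fintype.card A * c := by
  have h := hM _ (isBistochasticChoi_inv_card_smul_one hAB)
  rw [Matrix.mul_smul, Matrix.mul_one, trace_smul, trace_transpose, smul_eq_mul] at h
  rw [← h, mul_inv_cancel_left₀ (by simp)]

lemma eq_of_forall_isBistochasticChoi [Nonempty A] (hAB : Fintype.card A = Fintype.card B)
    {M : Matrix (A × B) (A × B) ℂ} {c : ℂ}
    (hM : ∀ C, IsBistochasticChoi C → trace (Mᵀ * C) = c) :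
    M = (Fintype.card A : ℂ)⁻¹ • (traceRight M ⊗ₖ 1 + 1 ⊗ₖ traceLeft M - c • 1) := by
  have : Nonempty B := Fintype.card_pos_iff.mp (hAB ▸ Fintype.card_pos)
  have hA : (Fintype.card A : ℂ) ≠ 0 := by simp
  conv_lhs => rw [eq_of_forall_trace_transpose_mul_eq_zero fun Y hYR hYL =>
    trace_transpose_mul_eq_zero_of_forall_isBistochasticChoi hAB hM hYR hYL]
  rw [trace_eq_of_forall_isBistochasticChoi hAB hM, ← hAB, mul_div_mul_left _ _ hA,
    div_eq_inv_mul]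
  module

end Bistochastic

section Link

variable {P A B F : Type*}

def traceFBlock [Fintype F] (R : Matrix (P × A × B × F) (P × A × B × F) ℂ) (p p' : P) :
    Matrix (A × B) (A × B) ℂ :=
  of fun x y => ∑ f, R (p, x.1, x.2, f) (p', y.1, y.2, f)

lemma sum_linkPABF_apply [Fintype A] [Fintype B] [Fintype F]
    (R : Matrix (P × A × B × F) (P × A × B × F) ℂ) (C : Matrix (A × B) (A × B) ℂ) (p p' : P) :
    ∑ f, linkPABF R C (p, f) (p', f) = trace ((traceFBlock R p p')ᵀ * C) := by
  calc ∑ f, linkPABF R C (p, f) (p', f)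
      = ∑ f, ∑ x : A × B, ∑ y : A × B, R (p, x.1, x.2, f) (p', y.1, y.2, f) * C x y := by
        simp [linkPABF, Fintype.sum_prod_type]
    _ = ∑ y : A × B, ∑ x : A × B, ∑ f, R (p, x.1, x.2, f) (p', y.1, y.2, f) * C x y := by
        rw [Finset.sum_comm]
        exact (Finset.sum_congr rfl fun _ _ => Finset.sum_comm).trans Finset.sum_comm
    _ = trace ((traceFBlock R p p')ᵀ * C) := by
        simp [traceFBlock, trace, mul_apply, Finset.sum_mul]

lemma linkPABF_posSemidef [Fintype P] [Fintype A] [Fintype B] [Fintype F] [DecidableEq P]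
    [DecidableEq F] {R : Matrix (P × A × B × F) (P × A × B × F) ℂ} {C : Matrix (A × B) (A × B) ℂ}
    (hR : R.PosSemidef) (hC : C.PosSemidef) : (linkPABF R C).PosSemidef := by
  let e : (P × F) × (A × B) → (P × A × B × F) × (A × B) :=
    fun v => ((v.1.1, v.2.1, v.2.2, v.1.2), v.2)
  convert ((hR.kronecker hC).submatrix e).sum_blocks using 1
  ext u u'
  simp [linkPABF, e, Fintype.sum_prod_type]

lemma traceFBlock_add [Fintype F] (R S : Matrix (P × A × B × F) (P × A × B × F) ℂ)
    (p p' : P) :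
    traceFBlock (R + S) p p' = traceFBlock R p p' + traceFBlock S p p' := by
  ext; simp [traceFBlock, Finset.sum_add_distrib]

lemma traceFBlock_sub [Fintype F] (R S : Matrix (P × A × B × F) (P × A × B × F) ℂ)
    (p p' : P) :
    traceFBlock (R - S) p p' = traceFBlock R p p' - traceFBlock S p p' := by
  ext; simp [traceFBlock, Finset.sum_sub_distrib]

lemma traceFBlock_smul [Fintype F] (c : ℂ) (R : Matrix (P × A × B × F) (P × A × B × F) ℂ)
    (p p' : P) :
    traceFBlock (c • R) p p' = c • traceFBlock R p p' := by
  ext; simp [traceFBlock, Finset.mul_sum]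

lemma traceFBlock_one [Fintype F] [DecidableEq P] [DecidableEq A] [DecidableEq B] [DecidableEq F]
    (p p' : P) :
    traceFBlock (1 : Matrix (P × A × B × F) (P × A × B × F) ℂ) p p' =
      (Fintype.card F : ℂ) • (if p = p' then 1 else 0 : ℂ) • 1 := by
  ext x y
  by_cases hp : p = p' <;> simp [traceFBlock, one_apply, hp, Prod.ext_iff]

-- The entrywise matrices below are `G ⊗ 1_B ⊗ 1_F` and `1_A ⊗ H ⊗ 1_F` on `P × A × B × F`.
lemma traceFBlock_of_kronecker_one [Fintype F] [DecidableEq B] [DecidableEq F]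
    (G : Matrix (P × A) (P × A) ℂ) (p p' : P) :
    traceFBlock (of fun u u' : P × A × B × F => G (u.1, u.2.1) (u'.1, u'.2.1) *
      (if u.2.2.1 = u'.2.2.1 then 1 else 0) * (if u.2.2.2 = u'.2.2.2 then 1 else 0)) p p' =
      (Fintype.card F : ℂ) • (G.submatrix (Prod.mk p) (Prod.mk p') ⊗ₖ 1) := by
  ext x y
  simp [traceFBlock, one_apply]

lemma traceFBlock_of_one_kronecker [Fintype F] [DecidableEq A] [DecidableEq F]
    (H : Matrix (P × B) (P × B) ℂ) (p p' : P) :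
    traceFBlock (of fun u u' : P × A × B × F => H (u.1, u.2.2.1) (u'.1, u'.2.2.1) *
      (if u.2.1 = u'.2.1 then 1 else 0) * (if u.2.2.2 = u'.2.2.2 then 1 else 0)) p p' =
      (Fintype.card F : ℂ) • (1 ⊗ₖ H.submatrix (Prod.mk p) (Prod.mk p')) := by
  ext x y
  simp [traceFBlock, one_apply]

lemma isHermitian_of_kronecker_one [DecidableEq B] [DecidableEq F]
    {G : Matrix (P × A) (P × A) ℂ} (hG : G.IsHermitian) :
    (of fun u u' : P × A × B × F => G (u.1, u.2.1) (u'.1, u'.2.1) *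
      (if u.2.2.1 = u'.2.2.1 then 1 else 0) *
        (if u.2.2.2 = u'.2.2.2 then 1 else 0)).IsHermitian := by
  refine IsHermitian.ext fun u u' => ?_
  simp only [of_apply, star_mul', hG.apply, apply_ite star, star_one, star_zero,
    eq_comm (a := u'.2.2.1), eq_comm (a := u'.2.2.2)]

lemma isHermitian_of_one_kronecker [DecidableEq A] [DecidableEq F]
    {H : Matrix (P × B) (P × B) ℂ} (hH : H.IsHermitian) :
    (of fun u u' : P × A × B × F => H (u.1, u.2.2.1) (u'.1, u'.2.2.1) *
      (if u.2.1 = u'.2.1 then 1 else 0) * (if u.2.2.2 = u'.2.2.2 then 1 else 0)).IsHermitian := by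
  refine IsHermitian.ext fun u u' => ?_
  simp only [of_apply, star_mul', hH.apply, apply_ite star, star_one, star_zero,
    eq_comm (a := u'.2.1), eq_comm (a := u'.2.2.2)]

def traceBF [Fintype B] [Fintype F] (R : Matrix (P × A × B × F) (P × A × B × F) ℂ) :
    Matrix (P × A) (P × A) ℂ :=
  of fun x y => ∑ b, ∑ f, R (x.1, x.2, b, f) (y.1, y.2, b, f)

def traceAF [Fintype A] [Fintype F] (R : Matrix (P × A × B × F) (P × A × B × F) ℂ) :
    Matrix (P × B) (P × B) ℂ :=
  of fun x y => ∑ a, ∑ f, R (x.1, a, x.2, f) (y.1, a, y.2, f)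

lemma IsHermitian.traceBF [Fintype B] [Fintype F]
    {R : Matrix (P × A × B × F) (P × A × B × F) ℂ} (hR : R.IsHermitian) : (traceBF R).IsHermitian :=
  IsHermitian.ext fun x y => by simp [Matrix.traceBF, star_sum, hR.apply]

lemma IsHermitian.traceAF [Fintype A] [Fintype F]
    {R : Matrix (P × A × B × F) (P × A × B × F) ℂ} (hR : R.IsHermitian) : (traceAF R).IsHermitian :=
  IsHermitian.ext fun x y => by simp [Matrix.traceAF, star_sum, hR.apply]

end Link

end Matrix

theorem exists_decomposition_of_forall_isBistochasticChoi {P A B F : Type*} [Fintype P]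
    [Fintype A] [Fintype B] [Fintype F] [DecidableEq P] [DecidableEq A] [DecidableEq B]
    [DecidableEq F] [Nonempty A] [Nonempty F] (d : ℕ) (hA : Fintype.card A = d)
    (hB : Fintype.card B = d) {R : Matrix (P × A × B × F) (P × A × B × F) ℂ}
    (hR : R.IsHermitian)
    (h : ∀ C, IsBistochasticChoi C → ∀ p p',
      trace ((traceFBlock R p p')ᵀ * C) = if p = p' then 1 else 0) :
    ∃ (S : Matrix (P × A × B × F) (P × A × B × F) ℂ)
      (G : Matrix (P × A) (P × A) ℂ) (H : Matrix (P × B) (P × B) ℂ),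
      S.IsHermitian ∧
      (∀ p a b p' a' b', (∑ f : F, S (p, a, b, f) (p', a', b', f)) = 0) ∧
      G.IsHermitian ∧
      (∀ p p', (∑ a : A, G (p, a) (p', a)) = 0) ∧
      H.IsHermitian ∧
      (∀ p p', (∑ b : B, H (p, b) (p', b)) = 0) ∧
      R = ((d : ℂ) * (Fintype.card F : ℂ))⁻¹ • 1 + S +
        Matrix.of (fun (u u' : P × A × B × F) =>
          G (u.1, u.2.1) (u'.1, u'.2.1) *
            (if u.2.2.1 = u'.2.2.1 then 1 else 0) * (if u.2.2.2 = u'.2.2.2 then 1 else 0)) +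
        Matrix.of (fun (u u' : P × A × B × F) =>
          H (u.1, u.2.2.1) (u'.1, u'.2.2.1) *
            (if u.2.1 = u'.2.1 then 1 else 0) * (if u.2.2.2 = u'.2.2.2 then 1 else 0)) := by
  subst hA
  have hcF : (Fintype.card F : ℂ) * ((Fintype.card A : ℂ) * Fintype.card F)⁻¹ =
      (Fintype.card A : ℂ)⁻¹ := by
    field_simp
  set c : ℂ := ((Fintype.card A : ℂ) * Fintype.card F)⁻¹
  have hc : IsSelfAdjoint c := ((IsSelfAdjoint.natCast _).mul (.natCast _)).inv₀
  have hT p p' := eq_of_forall_isBistochasticChoi hB.symm fun C hC => h C hC p p'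
  have htr p p' := trace_eq_of_forall_isBistochasticChoi hB.symm fun C hC => h C hC p p'
  obtain ⟨G, hG, hGblock⟩ : ∃ G : Matrix (P × A) (P × A) ℂ, G.IsHermitian ∧ ∀ p p',
      G.submatrix (Prod.mk p) (Prod.mk p') =
        c • (traceRight (traceFBlock R p p') - (if p = p' then 1 else 0 : ℂ) • 1) :=
    ⟨c • (traceBF R - 1), (hR.traceBF.sub isHermitian_one).smul hc,
      fun p p' => by rw [← submatrix_one_prodMk]; rfl⟩
  obtain ⟨H, hH, hHblock⟩ : ∃ H : Matrix (P × B) (P × B) ℂ, H.IsHermitian ∧ ∀ p p',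
      H.submatrix (Prod.mk p) (Prod.mk p') =
        c • (traceLeft (traceFBlock R p p') - (if p = p' then 1 else 0 : ℂ) • 1) :=
    ⟨c • (traceAF R - 1), (hR.traceAF.sub isHermitian_one).smul hc,
      fun p p' => by rw [← submatrix_one_prodMk]; rfl⟩
  refine ⟨_, G, H, ((hR.sub (isHermitian_one.smul hc)).sub (isHermitian_of_kronecker_one hG)).sub
    (isHermitian_of_one_kronecker hH), ?_, hG, ?_, hH, ?_, by abel⟩
  · intro p a b p' a' b'
    refine congr_fun (congr_fun (?_ : traceFBlock _ p p' = 0) (a, b)) (a', b')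
    rw [traceFBlock_sub, traceFBlock_sub, traceFBlock_sub, traceFBlock_smul, traceFBlock_one,
      traceFBlock_of_kronecker_one, traceFBlock_of_one_kronecker, hGblock, hHblock]
    nth_rewrite 1 [hT p p', ← hcF]
    simp only [smul_kronecker, kronecker_smul, sub_kronecker, kronecker_sub, one_kronecker_one]
    module
  · intro p p'
    calc ∑ a, G (p, a) (p', a) = trace (G.submatrix (Prod.mk p) (Prod.mk p')) := rfl
      _ = 0 := by
        rw [hGblock, trace_smul, trace_sub, trace_traceRight, htr, trace_smul, trace_one,
          smul_eq_mul, smul_eq_mul, mul_comm (Fintype.card A : ℂ), sub_self, mul_zero]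
  · intro p p'
    calc ∑ b, H (p, b) (p', b) = trace (H.submatrix (Prod.mk p) (Prod.mk p')) := rfl
      _ = 0 := by
        rw [hHblock, trace_smul, trace_sub, trace_traceLeft, htr, trace_smul, trace_one, hB,
          smul_eq_mul, smul_eq_mul, mul_comm (Fintype.card A : ℂ), sub_self, mul_zero]

theorem trace_traceFBlock_of_decomposition {P A B F : Type*} [Fintype A] [Fintype B] [Fintype F]
    [DecidableEq P] [DecidableEq A] [DecidableEq B] [DecidableEq F] [Nonempty A] [Nonempty F]
    (d : ℕ) (hA : Fintype.card A = d) {S : Matrix (P × A × B × F) (P × A × B × F) ℂ}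
    {G : Matrix (P × A) (P × A) ℂ} {H : Matrix (P × B) (P × B) ℂ}
    (hS : ∀ p a b p' a' b', (∑ f : F, S (p, a, b, f) (p', a', b', f)) = 0)
    (hG : ∀ p p', (∑ a : A, G (p, a) (p', a)) = 0)
    (hH : ∀ p p', (∑ b : B, H (p, b) (p', b)) = 0)
    {C : Matrix (A × B) (A × B) ℂ} (hC : IsBistochasticChoi C) (p p' : P) :
    trace ((traceFBlock (((d : ℂ) * (Fintype.card F : ℂ))⁻¹ • 1 + S +
        Matrix.of (fun (u u' : P × A × B × F) =>
          G (u.1, u.2.1) (u'.1, u'.2.1) *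
            (if u.2.2.1 = u'.2.2.1 then 1 else 0) * (if u.2.2.2 = u'.2.2.2 then 1 else 0)) +
        Matrix.of (fun (u u' : P × A × B × F) =>
          H (u.1, u.2.2.1) (u'.1, u'.2.2.1) *
            (if u.2.1 = u'.2.1 then 1 else 0) * (if u.2.2.2 = u'.2.2.2 then 1 else 0)))
          p p')ᵀ * C) =
      if p = p' then 1 else 0 := by
  subst hA
  have hSblock : traceFBlock S p p' = 0 := by
    ext x y; exact hS p x.1 x.2 p' y.1 y.2
  have hGtr : trace (G.submatrix (Prod.mk p) (Prod.mk p')) = 0 := hG p p'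
  have hHtr : trace (H.submatrix (Prod.mk p) (Prod.mk p')) = 0 := hH p p'
  have htrC : trace C = Fintype.card A := by
    rw [← trace_traceRight, hC.2.1, trace_one]
  rw [traceFBlock_add, traceFBlock_add, traceFBlock_add, traceFBlock_smul, traceFBlock_one,
    hSblock, traceFBlock_of_kronecker_one, traceFBlock_of_one_kronecker]
  simp only [transpose_add, transpose_smul, ← kroneckerMap_transpose, transpose_one, add_mul,
    smul_mul, one_mul, trace_add, trace_smul, trace_kronecker_one_mul, trace_one_kronecker_mul,
    hC.2.1, hC.2.2, mul_one, trace_transpose, htrC, hGtr, hHtr, smul_eq_mul, mul_zero, add_zero]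
  field_simp

theorem stmt3_general {P A B F : Type*} [Fintype P] [Fintype A] [Fintype B] [Fintype F]
    [DecidableEq P] [DecidableEq A] [DecidableEq B] [DecidableEq F]
    [Nonempty A] [Nonempty F]
    (d : ℕ) (hA : Fintype.card A = d) (hB : Fintype.card B = d)
    (R : Matrix (P × A × B × F) (P × A × B × F) ℂ) (hR : R.PosSemidef) :
    (∀ C : Matrix (A × B) (A × B) ℂ, C.PosSemidef →
      (∀ a a', (∑ b : B, C (a, b) (a', b)) = if a = a' then 1 else 0) →
      (∀ b b', (∑ a : A, C (a, b) (a, b')) = if b = b' then 1 else 0) →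
      (linkPABF R C).PosSemidef ∧
      (∀ p p' : P, (∑ f : F, linkPABF R C (p, f) (p', f)) = if p = p' then 1 else 0)) ↔
    ∃ (S : Matrix (P × A × B × F) (P × A × B × F) ℂ)
      (G : Matrix (P × A) (P × A) ℂ) (H : Matrix (P × B) (P × B) ℂ),
      S.IsHermitian ∧
      (∀ p a b p' a' b', (∑ f : F, S (p, a, b, f) (p', a', b', f)) = 0) ∧
      G.IsHermitian ∧
      (∀ p p', (∑ a : A, G (p, a) (p', a)) = 0) ∧
      H.IsHermitian ∧
      (∀ p p', (∑ b : B, H (p, b) (p', b)) = 0) ∧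
      R = ((d : ℂ) * (Fintype.card F : ℂ))⁻¹ • 1 + S +
        Matrix.of (fun (u u' : P × A × B × F) =>
          G (u.1, u.2.1) (u'.1, u'.2.1) *
            (if u.2.2.1 = u'.2.2.1 then 1 else 0) * (if u.2.2.2 = u'.2.2.2 then 1 else 0)) +
        Matrix.of (fun (u u' : P × A × B × F) =>
          H (u.1, u.2.2.1) (u'.1, u'.2.2.1) *
            (if u.2.1 = u'.2.1 then 1 else 0) * (if u.2.2.2 = u'.2.2.2 then 1 else 0)) := by
  constructor
  · intro h
    refine exists_decomposition_of_forall_isBistochasticChoi d hA hB hR.1 fun C hC p p' => ?_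
    obtain ⟨hCpos, hrow, hcol⟩ := isBistochasticChoi_iff.mp hC
    rw [← sum_linkPABF_apply]
    exact (h C hCpos hrow hcol).2 p p'
  · rintro ⟨S, G, H, -, hS, -, hG, -, hH, rfl⟩ C hC hrow hcol
    refine ⟨linkPABF_posSemidef hR hC, fun p p' => ?_⟩
    rw [sum_linkPABF_apply]
    exact trace_traceFBlock_of_decomposition d hA hS hG hH
      (isBistochasticChoi_iff.mpr ⟨hC, hrow, hcol⟩) p p'

/-- characterization of bistochastic supermaps. A PSD matrix `R` on
`P × A × B × F` (with `|A| = |B| = d`) maps every bistochastic channel Choi operator `C`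
to a channel Choi operator from `P` to `F` (i.e. `R * C ≥ 0` and `Tr_F[R * C] = 1_P`)
if and only if `R = (1/(d·|F|))·1 + S + G̃ ⊗ 1_F + H̃ ⊗ 1_F` with `S` Hermitian and
`Tr_F[S] = 0`, `G` Hermitian on `P × A` with `Tr_A[G] = 0`, and `H` Hermitian on
`P × B` with `Tr_B[H] = 0`. -/
theorem stmt3 {P A B F : Type*} [Fintype P] [Fintype A] [Fintype B] [Fintype F]
    [DecidableEq P] [DecidableEq A] [DecidableEq B] [DecidableEq F]
    [Nonempty P] [Nonempty A] [Nonempty B] [Nonempty F]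
    (d : ℕ) (hA : Fintype.card A = d) (hB : Fintype.card B = d)
    (R : Matrix (P × A × B × F) (P × A × B × F) ℂ) (hR : R.PosSemidef) :
    (∀ C : Matrix (A × B) (A × B) ℂ, C.PosSemidef →
      (∀ a a', (∑ b : B, C (a, b) (a', b)) = if a = a' then 1 else 0) →
      (∀ b b', (∑ a : A, C (a, b) (a, b')) = if b = b' then 1 else 0) →
      (linkPABF R C).PosSemidef ∧
      (∀ p p' : P, (∑ f : F, linkPABF R C (p, f) (p', f)) = if p = p' then 1 else 0)) ↔
    ∃ (S : Matrix (P × A × B × F) (P × A × B × F) ℂ)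
      (G : Matrix (P × A) (P × A) ℂ) (H : Matrix (P × B) (P × B) ℂ),
      S.IsHermitian ∧
      (∀ p a b p' a' b', (∑ f : F, S (p, a, b, f) (p', a', b', f)) = 0) ∧
      G.IsHermitian ∧
      (∀ p p', (∑ a : A, G (p, a) (p', a)) = 0) ∧
      H.IsHermitian ∧
      (∀ p p', (∑ b : B, H (p, b) (p', b)) = 0) ∧
      R = ((d : ℂ) * (Fintype.card F : ℂ))⁻¹ • 1 + S +
        Matrix.of (fun (u u' : P × A × B × F) =>
          G (u.1, u.2.1) (u'.1, u'.2.1) *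
            (if u.2.2.1 = u'.2.2.1 then 1 else 0) * (if u.2.2.2 = u'.2.2.2 then 1 else 0)) +
        Matrix.of (fun (u u' : P × A × B × F) =>
          H (u.1, u.2.2.1) (u'.1, u'.2.2.1) *
            (if u.2.1 = u'.2.1 then 1 else 0) * (if u.2.2.2 = u'.2.2.2 then 1 else 0)) :=
  stmt3_general d hA hB R hR
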